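/- arXiv:1811.06319 — 2 statements merged into one kernel-verified Lean document; each statement's English description precedes it below -/
import Mathlib

section
/- Let V be a Hilbert space with inner product a, W₁,…,Wₙ closed subspaces with a-orthogonal projections Pᵢ, and assume a coloring such that the index set {1,…,n} splits into N classes within each of which the subspaces are pairwise a-orthogonal. Then P = Σᵢ Pᵢ satisfies a(Pv, v) ≤ N a(v, v) for all v ∈ V. -/
open scoped InnerProductSpace

/-- Colored upper bound for the additive Schwarz operator: if the subspaces can
be split into `N` classes, the subspaces in each class being pairwise
`a`-orthogonal, then `a(Pv,v) ≤ N a(v,v)`. -/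
theorem stmt6 (V : Type*) [NormedAddCommGroup V] [InnerProductSpace ℝ V] [CompleteSpace V]
    (n N : ℕ) (W : Fin n → Submodule ℝ V) (hWclosed : ∀ i, IsClosed ((W i : Set V)))
    (P : Fin n → V →L[ℝ] V)
    (hrange : ∀ i (v : V), P i v ∈ W i)
    (hproj : ∀ i (v : V), ∀ w ∈ W i, ⟪P i v, w⟫_ℝ = ⟪v, w⟫_ℝ)
    (color : Fin n → Fin N)
    (horth : ∀ i j, i ≠ j → color i = color j →
      ∀ wi ∈ W i, ∀ wj ∈ W j, ⟪wi, wj⟫_ℝ = 0) :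
    ∀ v : V, ⟪(∑ i, P i) v, v⟫_ℝ ≤ (N : ℝ) * ⟪v, v⟫_ℝ := by
  intro v
  have key : ∀ c : Fin N,
      (∑ i ∈ Finset.univ.filter (fun i => color i = c), ⟪(P i) v, v⟫_ℝ) ≤ ⟪v, v⟫_ℝ := by
    intro c
    set s := Finset.univ.filter (fun i => color i = c) with hs
    set u := ∑ i ∈ s, P i v with hu
    have huu : ⟪u, u⟫_ℝ = ∑ i ∈ s, ⟪P i v, v⟫_ℝ := by
      rw [hu, inner_sum]
      refine Finset.sum_congr rfl fun j hj => ?_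
      rw [sum_inner, Finset.sum_eq_single j]
      · rw [hproj j v (P j v) (hrange j v), real_inner_comm]
      · intro i hi hij
        have hci : color i = c := (Finset.mem_filter.mp hi).2
        have hcj : color j = c := (Finset.mem_filter.mp hj).2
        exact horth i j hij (hci.trans hcj.symm) _ (hrange i v) _ (hrange j v)
      · intro h; exact absurd hj h
    have hvu : ⟪v, u⟫_ℝ = ∑ i ∈ s, ⟪P i v, v⟫_ℝ := by
      rw [hu, inner_sum]
      refine Finset.sum_congr rfl fun j hj => ?_
      exact real_inner_comm _ v
    have h1 : ⟪u, u⟫_ℝ = ⟪v, u⟫_ℝ := by rw [huu, hvu]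
    have hcs : ⟪v, u⟫_ℝ ≤ ‖v‖ * ‖u‖ := real_inner_le_norm v u
    have hnu : ⟪u, u⟫_ℝ = ‖u‖ ^ 2 := real_inner_self_eq_norm_sq u
    have hnv : ⟪v, v⟫_ℝ = ‖v‖ ^ 2 := real_inner_self_eq_norm_sq v
    rw [← huu]
    nlinarith [norm_nonneg u, norm_nonneg v]
  calc ⟪(∑ i, P i) v, v⟫_ℝ = ∑ i, ⟪P i v, v⟫_ℝ := by
        simp [ContinuousLinearMap.sum_apply, sum_inner]
    _ = ∑ c : Fin N, ∑ i ∈ Finset.univ.filter (fun i => color i = c), ⟪P i v, v⟫_ℝ :=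
        (Finset.sum_fiberwise _ _ _).symm
    _ ≤ ∑ c : Fin N, ⟪v, v⟫_ℝ := Finset.sum_le_sum fun c _ => key c
    _ = N * ⟪v, v⟫_ℝ := by simp [Finset.sum_const, nsmul_eq_mul]
end

section
/- Let V be a Hilbert space with inner product a, W₁,…,Wₙ closed subspaces with a-orthogonal projections Pᵢ, and suppose there is a constant K₁ such that every v ∈ span(W₁ + ⋯ + Wₙ) (assumed to equal V) admits a decomposition v = Σᵢ vᵢ with vᵢ ∈ Wᵢ and Σᵢ ‖vᵢ‖²_a ≤ K₁ ‖v‖²_a. Then a(Pv, v) ≥ K₁⁻¹ a(v,v) for all v ∈ V, where P = Σᵢ Pᵢ. -/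
/-!
Since `Pᵢ` is the orthogonal projection onto `Wᵢ`, `a(Pv, v) = Σᵢ ‖Pᵢv‖²`. For a stable
decomposition `v = Σᵢ vᵢ`, `‖v‖² = Σᵢ a(v, vᵢ) = Σᵢ a(Pᵢv, vᵢ) ≤ Σᵢ ‖Pᵢv‖ ‖vᵢ‖`, and
Cauchy–Schwarz in `ℝⁿ` gives `‖v‖⁴ ≤ a(Pv, v) · Σᵢ ‖vᵢ‖² ≤ a(Pv, v) · K₁ ‖v‖²`.
-/

open scoped InnerProductSpace

section

variable {V : Type*} [NormedAddCommGroup V] [InnerProductSpace ℝ V]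

theorem real_inner_proj_self_eq_norm_sq {K : Submodule ℝ V} {v p : V} (hp : p ∈ K)
    (hproj : ∀ w ∈ K, ⟪p, w⟫_ℝ = ⟪v, w⟫_ℝ) : ⟪p, v⟫_ℝ = ‖p‖ ^ 2 := by
  rw [real_inner_comm, ← hproj p hp, real_inner_self_eq_norm_sq]

theorem sq_norm_sq_le_sum_norm_sq_mul_of_eq_sum {ι : Type*} (s : Finset ι) {v : V}
    {p u : ι → V} (hv : v = ∑ i ∈ s, u i) (hp : ∀ i ∈ s, ⟪p i, u i⟫_ℝ = ⟪v, u i⟫_ℝ) :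
    (‖v‖ ^ 2) ^ 2 ≤ (∑ i ∈ s, ‖p i‖ ^ 2) * ∑ i ∈ s, ‖u i‖ ^ 2 := by
  have hle : ‖v‖ ^ 2 ≤ ∑ i ∈ s, ‖p i‖ * ‖u i‖ :=
    calc ‖v‖ ^ 2 = ∑ i ∈ s, ⟪v, u i⟫_ℝ := by
          rw [← inner_sum, ← hv, real_inner_self_eq_norm_sq]
      _ = ∑ i ∈ s, ⟪p i, u i⟫_ℝ := Finset.sum_congr rfl fun i hi => (hp i hi).symm
      _ ≤ ∑ i ∈ s, ‖p i‖ * ‖u i‖ := Finset.sum_le_sum fun i _ => real_inner_le_norm _ _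
  calc (‖v‖ ^ 2) ^ 2 ≤ (∑ i ∈ s, ‖p i‖ * ‖u i‖) ^ 2 := by gcongr
    _ ≤ _ := Finset.sum_mul_sq_le_sq_mul_sq _ _ _

end

theorem inv_mul_le_of_sq_le_mul {K S x : ℝ} (hK : 0 < K) (hS : 0 ≤ S)
    (h : x ^ 2 ≤ S * (K * x)) : K⁻¹ * x ≤ S := by
  rw [inv_mul_le_iff₀ hK]
  rcases le_or_gt x 0 with hx | hx <;> nlinarith

theorem stmt7_general (V : Type*) [NormedAddCommGroup V] [InnerProductSpace ℝ V]
    (n : ℕ) (W : Fin n → Submodule ℝ V)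
    (P : Fin n → V →L[ℝ] V)
    (hrange : ∀ i (v : V), P i v ∈ W i)
    (hproj : ∀ i (v : V), ∀ w ∈ W i, ⟪P i v, w⟫_ℝ = ⟪v, w⟫_ℝ)
    (K₁ : ℝ) (hK₁ : 0 < K₁)
    (hstable : ∀ v : V, ∃ vdec : Fin n → V, (∀ i, vdec i ∈ W i) ∧
      v = ∑ i, vdec i ∧ ∑ i, ‖vdec i‖ ^ 2 ≤ K₁ * ‖v‖ ^ 2) :
    ∀ v : V, K₁⁻¹ * ⟪v, v⟫_ℝ ≤ ⟪(∑ i, P i) v, v⟫_ℝ := by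
  intro v
  obtain ⟨u, hu, hv, hsum⟩ := hstable v
  have hPv : ⟪(∑ i, P i) v, v⟫_ℝ = ∑ i, ‖P i v‖ ^ 2 := by
    rw [sum_apply, sum_inner]
    exact Finset.sum_congr rfl fun i _ => real_inner_proj_self_eq_norm_sq (hrange i v) (hproj i v)
  have hPv_nonneg : 0 ≤ ⟪(∑ i, P i) v, v⟫_ℝ := hPv ▸ Finset.sum_nonneg fun i _ => sq_nonneg _
  rw [real_inner_self_eq_norm_sq]
  refine inv_mul_le_of_sq_le_mul hK₁ hPv_nonneg ?_
  calc (‖v‖ ^ 2) ^ 2 ≤ (∑ i, ‖P i v‖ ^ 2) * ∑ i, ‖u i‖ ^ 2 :=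
        sq_norm_sq_le_sum_norm_sq_mul_of_eq_sum _ hv fun i _ => hproj i v (u i) (hu i)
    _ ≤ ⟪(∑ i, P i) v, v⟫_ℝ * (K₁ * ‖v‖ ^ 2) := by
        rw [hPv]
        exact mul_le_mul_of_nonneg_left hsum (Finset.sum_nonneg fun i _ => sq_nonneg _)

/-- Lions' lemma / stable decomposition: if every `v` admits a decomposition
`v = Σᵢ vᵢ`, `vᵢ ∈ Wᵢ`, with `Σᵢ ‖vᵢ‖² ≤ K₁ ‖v‖²`, then the additive Schwarz
operator satisfies `a(Pv,v) ≥ K₁⁻¹ a(v,v)`. -/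
theorem stmt7 (V : Type*) [NormedAddCommGroup V] [InnerProductSpace ℝ V] [CompleteSpace V]
    (n : ℕ) (W : Fin n → Submodule ℝ V) (hWclosed : ∀ i, IsClosed ((W i : Set V)))
    (P : Fin n → V →L[ℝ] V)
    (hrange : ∀ i (v : V), P i v ∈ W i)
    (hproj : ∀ i (v : V), ∀ w ∈ W i, ⟪P i v, w⟫_ℝ = ⟪v, w⟫_ℝ)
    (K₁ : ℝ) (hK₁ : 0 < K₁)
    (hstable : ∀ v : V, ∃ vdec : Fin n → V, (∀ i, vdec i ∈ W i) ∧
      v = ∑ i, vdec i ∧ ∑ i, ‖vdec i‖ ^ 2 ≤ K₁ * ‖v‖ ^ 2) :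
    ∀ v : V, K₁⁻¹ * ⟪v, v⟫_ℝ ≤ ⟪(∑ i, P i) v, v⟫_ℝ :=
  stmt7_general V n W P hrange hproj K₁ hK₁ hstable
end
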